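/- For all n ≥ 0 and complex parameter r, the (q,r)-Dowling numbers satisfy D_{m,r+1,q}(n) = ∑_{j=0}^{n} C(n,j) D_{m,r,q}(j). -/

import Mathlib

open Finset

noncomputable def qint (q : ℂ) (n : ℕ) : ℂ := (q ^ n - 1) / (q - 1)

/-- (q,r)-Whitney numbers of the first kind, via the triangular recurrence
`w(n+1,k) = q^{-n} (w(n,k-1) - (m[n]_q + r) w(n,k))`, with `w(0,0)=1` and
`w(n,k)=0` for `k>n` (the `k<0` values are zero, absorbed in the `k=0` case). -/
noncomputable def qw (q m r : ℂ) : ℕ → ℕ → ℂ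
  | 0, 0 => 1
  | 0, _ + 1 => 0
  | n + 1, 0 => q ^ (-(n : ℤ)) * (0 - (m * qint q n + r) * qw q m r n 0)
  | n + 1, k + 1 => q ^ (-(n : ℤ)) * (qw q m r n k - (m * qint q n + r) * qw q m r n (k + 1))

/-- (q,r)-Whitney numbers of the second kind, via
`W(n+1,k) = q^{k-1} W(n,k-1) + (m[k]_q + r) W(n,k)`, with `W(0,0)=1`. -/
noncomputable def qW (q m r : ℂ) : ℕ → ℕ → ℂ
  | 0, 0 => 1
  | 0, _ + 1 => 0
  | n + 1, 0 => (m * qint q 0 + r) * qW q m r n 0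
  | n + 1, k + 1 => q ^ k * qW q m r n k + (m * qint q (k + 1) + r) * qW q m r n (k + 1)

noncomputable def qD (q m r : ℂ) (n : ℕ) : ℂ := ∑ k ∈ Finset.range (n + 1), qW q m r n k

section

variable (q m r : ℂ)

theorem qW_eq_zero_of_lt {n k : ℕ} (h : n < k) : qW q m r n k = 0 := by
  induction n generalizing k with
  | zero =>
    obtain ⟨k, rfl⟩ := Nat.exists_eq_add_of_lt h
    rfl
  | succ n ih =>
    obtain ⟨k, rfl⟩ := Nat.exists_eq_add_of_lt h
    rw [qW, ih (by omega), ih (by omega), mul_zero, mul_zero, add_zero]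

theorem qD_eq_sum_range_of_le {n N : ℕ} (h : n ≤ N) :
    qD q m r n = ∑ k ∈ range (N + 1), qW q m r n k :=
  sum_subset (range_subset_range.mpr (by omega)) fun _ _ hk =>
    qW_eq_zero_of_lt q m r (by simp only [mem_range, not_lt] at hk; omega)

/-- Both sides satisfy the recurrence of `qW q m (r + 1)`: Pascal's rule splits the binomial sum
at `n + 1` into the sums at `n` of `qW j k` and of `qW (j + 1) k`, and the recurrence of
`qW q m r` turns the second one into the `r`-part of the new recurrence. -/
theorem qW_add_one (n k : ℕ) :
    qW q m (r + 1) n k = ∑ j ∈ range (n + 1), (n.choose j : ℂ) * qW q m r j k := by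
  induction n generalizing k with
  | zero => cases k <;> simp [qW]
  | succ n ih =>
    rw [sum_choose_succ_mul (fun j _ => qW q m r j k)]
    cases k <;>
    · simp only [qW, ih, mul_sum, ← sum_add_distrib]
      exact sum_congr rfl fun j _ => by ring

end

theorem stmt13_general (q m r : ℂ) (n : ℕ) :
    qD q m (r + 1) n = ∑ j ∈ Finset.range (n + 1), (n.choose j : ℂ) * qD q m r j := by
  calc qD q m (r + 1) n
      = ∑ j ∈ range (n + 1), (n.choose j : ℂ) * ∑ k ∈ range (n + 1), qW q m r j k := by
        simp only [qD, qW_add_one, mul_sum]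
        exact sum_comm
    _ = ∑ j ∈ range (n + 1), (n.choose j : ℂ) * qD q m r j :=
        sum_congr rfl fun j hj => by
          rw [qD_eq_sum_range_of_le q m r (Nat.lt_succ_iff.mp (mem_range.mp hj))]

theorem stmt13 (q m r : ℂ) (hq0 : q ≠ 0) (hq1 : q ≠ 1) (n : ℕ) :
    qD q m (r + 1) n = ∑ j ∈ Finset.range (n + 1), (n.choose j : ℂ) * qD q m r j :=
  stmt13_general q m r n
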